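/- Let m ≥ 4 and let C be an m×n binary 2-covering array such that wt(c^i) ≤ ⌊m/2⌋ for every column c^i of C. Then there exists an m×n binary 2-covering array C' whose columns c'^i satisfy wt(c'^i) = ⌊m/2⌋ and supp(c^i) ⊆ supp(c'^i) for all i = 1,…,n. -/

import Mathlib

/-- An `m × n` matrix over `B_q = {0,…,q-1}` is a `t`-covering array if for any `t`
distinct column indices and any `q`-ary vector of length `t`, some row realizes it. -/
def IsCoveringArray (m n q t : ℕ) (C : Fin m → Fin n → Fin q) : Prop :=
  ∀ cols : Fin t → Fin n, Function.Injective cols →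
    ∀ v : Fin t → Fin q, ∃ r : Fin m, ∀ j : Fin t, C r (cols j) = v j

/-- `CAN t n q` : the minimal size `m` for which a `CA(m; t, n, q)` exists. -/
noncomputable def CAN (t n q : ℕ) : ℕ :=
  sInf { m | ∃ C : Fin m → Fin n → Fin q, IsCoveringArray m n q t C }

/-- The weight of the `i`-th column: the number of nonzero entries. -/
def colWt {m n q : ℕ} (C : Fin m → Fin n → Fin q) (i : Fin n) : ℕ :=
  (Finset.univ.filter fun r : Fin m => (C r i : ℕ) ≠ 0).card

/-- The support of the `i`-th column: the set of coordinates where it is nonzero. -/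
def colSupp {m n q : ℕ} (C : Fin m → Fin n → Fin q) (i : Fin n) : Finset (Fin m) :=
  Finset.univ.filter fun r : Fin m => (C r i : ℕ) ≠ 0

/-- The Hamming distance between the `i`-th and `j`-th columns. -/
def colDist {m n q : ℕ} (C : Fin m → Fin n → Fin q) (i j : Fin n) : ℕ :=
  (Finset.univ.filter fun r : Fin m => C r i ≠ C r j).card

/-- Two arrays are equivalent if one is obtained from the other by a row permutation,
a column permutation, and value permutations applied columnwise. -/
def CAEquiv {m n q : ℕ} (C C' : Fin m → Fin n → Fin q) : Prop :=
  ∃ (σ : Equiv.Perm (Fin m)) (τ : Equiv.Perm (Fin n)) (f : Fin n → Equiv.Perm (Fin q)),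
    ∀ r i, C' r i = f i (C (σ r) (τ i))

/-- The standard maximal binary 2-covering array of size `m` : an
`m × (m-1).choose (m/2 - 1)` binary matrix whose first row is all ones and whose columns,
restricted to the remaining `m - 1` rows, are exactly (i.e. are pairwise distinct) the binary
vectors of length `m-1` with `m/2 - 1` ones. -/
def IsStandardMaxArray (m : ℕ) (S : Fin m → Fin ((m-1).choose (m/2 - 1)) → Fin 2) : Prop :=
  (∀ (r : Fin m) (i), (r : ℕ) = 0 → S r i = 1) ∧
  (Function.Injective fun i => fun r => S r i) ∧
  (∀ i, (Finset.univ.filter fun r : Fin m => (r : ℕ) ≠ 0 ∧ S r i = 1).card = m/2 - 1)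

/-!
Binary columns are determined by their supports, and `C` is a 2-covering array exactly when
any two supports are incomparable, intersect, and do not cover all rows. Enlarging supports
keeps them intersecting, and once all of them have size `⌊m/2⌋` two intersecting supports cover
at most `m - 1` rows. So it suffices to enlarge an antichain of sets of size at most `h` to an
antichain of `h`-sets when `2h ≤ m`. This is done one level at a time: for `2r < m` the upward
local LYM inequality gives Hall's condition, so every `r`-set can be sent injectively to an
`(r+1)`-superset, and raising exactly the `r`-sets of the antichain this way keeps it an antichain.
-/

open Finset FinsetFamily

namespace Finset

variable {α : Type*} [DecidableEq α] [Fintype α] {𝒜 : Finset (Finset α)} {r : ℕ}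

theorem card_mul_le_card_upShadow_mul (h𝒜 : (𝒜 : Set (Finset α)).Sized r) :
    #𝒜 * (Fintype.card α - r) ≤ #(∂⁺ 𝒜) * (r + 1) := by
  rcases le_or_gt r (Fintype.card α) with hr | hr
  · simpa [Nat.sub_sub_self hr] using card_mul_le_card_shadow_mul h𝒜.compls
  · simp [Nat.sub_eq_zero_of_le hr.le]

theorem card_le_card_upShadow (h𝒜 : (𝒜 : Set (Finset α)).Sized r)
    (hr : 2 * r < Fintype.card α) : #𝒜 ≤ #(∂⁺ 𝒜) :=
  Nat.le_of_mul_le_mul_right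
    ((Nat.mul_le_mul_left _ (by omega)).trans (card_mul_le_card_upShadow_mul h𝒜)) r.succ_pos

theorem exists_injOn_subset_card_succ (hr : 2 * r < Fintype.card α) :
    ∃ f : Finset α → Finset α, Set.InjOn f {s | #s = r} ∧
      ∀ s : Finset α, #s = r → s ⊆ f s ∧ #(f s) = r + 1 := by
  let t : {s : Finset α // #s = r} → Finset (Finset α) := fun s => ∂⁺ {s.1}
  have hall (A : Finset {s : Finset α // #s = r}) : #A ≤ #(A.biUnion t) := by
    have hA : A.biUnion t = ∂⁺ (A.map (Function.Embedding.subtype _)) := by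
      ext u; simp [t, mem_upShadow_iff]
    rw [hA, ← card_map (Function.Embedding.subtype _)]
    refine card_le_card_upShadow ?_ hr
    intro s hs
    simp only [coe_map, Set.mem_image] at hs
    obtain ⟨s, -, rfl⟩ := hs
    exact s.2
  obtain ⟨f, hf_inj, hf_mem⟩ := (all_card_le_biUnion_card_iff_exists_injective t).1 hall
  refine ⟨fun s => if hs : #s = r then f ⟨s, hs⟩ else s, fun s hs s' hs' hss' => ?_,
    fun s hs => ?_⟩
  · simp only [Set.mem_ofPred_eq] at hs hs'
    exact congrArg Subtype.val (hf_inj (by simpa [hs, hs'] using hss'))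
  · simpa [hs, t, mem_upShadow_iff_exists_mem_card_add_one] using hf_mem ⟨s, hs⟩

variable {ι : Type*} {h : ℕ}

theorem exists_pairwise_not_subset_supersets_succ_le_card (g : ι → Finset α)
    (hg : Pairwise fun i j => ¬ g i ⊆ g j) (hr : 2 * r < Fintype.card α) (hrh : r < h)
    (hcard : ∀ i, r ≤ #(g i) ∧ #(g i) ≤ h) :
    ∃ g' : ι → Finset α, (Pairwise fun i j => ¬ g' i ⊆ g' j) ∧
      ∀ i, g i ⊆ g' i ∧ r + 1 ≤ #(g' i) ∧ #(g' i) ≤ h := by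
  obtain ⟨f, hf_inj, hf⟩ := exists_injOn_subset_card_succ hr
  refine ⟨fun i => if #(g i) = r then f (g i) else g i, fun i j hij hsub => ?_, fun i => ?_⟩
  · dsimp only at hsub
    split_ifs at hsub with hi hj hj
    · have heq := eq_of_subset_of_card_le hsub (by rw [(hf _ hi).2, (hf _ hj).2])
      exact hg hij (hf_inj hi hj heq ▸ subset_rfl)
    · exact hg hij ((hf _ hi).1.trans hsub)
    · -- `f (g j)` has size `r + 1 ≤ #(g i)`, so it can only lie in `g i` by being equal to it
      have hgi := hcard i
      have heq := eq_of_subset_of_card_le hsub (by rw [(hf _ hj).2]; omega)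
      exact hg hij.symm (heq ▸ (hf _ hj).1)
    · exact hg hij hsub
  · have hgi := hcard i
    dsimp only
    split_ifs with hi
    · have hfi := (hf _ hi).2
      exact ⟨(hf _ hi).1, by omega, by omega⟩
    · exact ⟨subset_rfl, by omega, hgi.2⟩

theorem exists_pairwise_not_subset_supersets_card_eq (g : ι → Finset α)
    (hg : Pairwise fun i j => ¬ g i ⊆ g j) (hh : 2 * h ≤ Fintype.card α)
    (hcard : ∀ i, #(g i) ≤ h) :
    ∃ g' : ι → Finset α, (Pairwise fun i j => ¬ g' i ⊆ g' j) ∧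
      ∀ i, g i ⊆ g' i ∧ #(g' i) = h := by
  have hraise (r : ℕ) (hr : r ≤ h) : ∃ g' : ι → Finset α,
      (Pairwise fun i j => ¬ g' i ⊆ g' j) ∧ ∀ i, g i ⊆ g' i ∧ r ≤ #(g' i) ∧ #(g' i) ≤ h := by
    induction r with
    | zero => exact ⟨g, hg, fun i => ⟨subset_rfl, Nat.zero_le _, hcard i⟩⟩
    | succ r ih =>
      obtain ⟨g₁, hg₁, hgg₁⟩ := ih (by omega)
      obtain ⟨g₂, hg₂, hg₁g₂⟩ :=
        exists_pairwise_not_subset_supersets_succ_le_card g₁ hg₁ (by omega) (by omega)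
          fun i => (hgg₁ i).2
      exact ⟨g₂, hg₂, fun i => ⟨(hgg₁ i).1.trans (hg₁g₂ i).1, (hg₁g₂ i).2⟩⟩
  obtain ⟨g', hg', hgg'⟩ := hraise h le_rfl
  exact ⟨g', hg', fun i => ⟨(hgg' i).1, by have := hgg' i; omega⟩⟩

theorem union_ne_univ_of_inter_nonempty {s t : Finset α} (hs : #s ≤ h) (ht : #t ≤ h)
    (hh : 2 * h ≤ Fintype.card α) (hst : (s ∩ t).Nonempty) : s ∪ t ≠ univ := by
  intro hunion
  have := card_union_add_card_inter s t
  rw [hunion, card_univ] at this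
  have := hst.card_pos
  omega

end Finset

section CoveringArray

variable {m n q : ℕ}

theorem isCoveringArray_two_iff {C : Fin m → Fin n → Fin q} :
    IsCoveringArray m n q 2 C ↔ Pairwise fun i j => ∀ a b, ∃ r, C r i = a ∧ C r j = b := by
  constructor
  · intro hC i j hij a b
    have hinj : Function.Injective ![i, j] := by
      simp [Function.Injective, Fin.forall_fin_two, hij, hij.symm]
    obtain ⟨r, hr⟩ := hC ![i, j] hinj ![a, b]
    exact ⟨r, hr 0, hr 1⟩
  · intro hC cols hcols v
    obtain ⟨r, hr0, hr1⟩ := hC (hcols.ne zero_ne_one) (v 0) (v 1)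
    exact ⟨r, Fin.forall_fin_two.2 ⟨hr0, hr1⟩⟩

theorem mem_colSupp_iff {C : Fin m → Fin n → Fin 2} {r : Fin m} {i : Fin n} :
    r ∈ colSupp C i ↔ C r i = 1 := by
  simp only [colSupp, mem_filter, mem_univ, true_and]
  omega

theorem notMem_colSupp_iff {C : Fin m → Fin n → Fin 2} {r : Fin m} {i : Fin n} :
    r ∉ colSupp C i ↔ C r i = 0 := by
  simp [colSupp]

theorem colSupp_ite (T : Fin n → Finset (Fin m)) (i : Fin n) :
    colSupp (fun r i => if r ∈ T i then (1 : Fin 2) else 0) i = T i := by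
  ext r; simp [colSupp]

theorem isCoveringArray_two_two_iff_colSupp {C : Fin m → Fin n → Fin 2} :
    IsCoveringArray m n 2 2 C ↔ Pairwise fun i j =>
      colSupp C i ∪ colSupp C j ≠ univ ∧ ¬ colSupp C j ⊆ colSupp C i ∧
        ¬ colSupp C i ⊆ colSupp C j ∧ (colSupp C i ∩ colSupp C j).Nonempty := by
  rw [isCoveringArray_two_iff]
  refine forall₂_congr fun i j => imp_congr_right fun _ => ?_
  simp only [Fin.forall_fin_two, ← mem_colSupp_iff, ← notMem_colSupp_iff, not_subset,
    Finset.Nonempty, mem_inter, Ne, eq_univ_iff_forall, mem_union, not_forall, not_or]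
  aesop

end CoveringArray

theorem weight_saturation_general (m n : ℕ) (C : Fin m → Fin n → Fin 2)
    (hC : IsCoveringArray m n 2 2 C)
    (hwt : ∀ i : Fin n, colWt C i ≤ m / 2) :
    ∃ C' : Fin m → Fin n → Fin 2, IsCoveringArray m n 2 2 C' ∧
      ∀ i : Fin n, colWt C' i = m / 2 ∧ colSupp C i ⊆ colSupp C' i := by
  have hS := isCoveringArray_two_two_iff_colSupp.1 hC
  have hm : 2 * (m / 2) ≤ Fintype.card (Fin m) := by simp only [Fintype.card_fin]; omega
  obtain ⟨T, hT, hST⟩ := exists_pairwise_not_subset_supersets_card_eq (colSupp C)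
    (fun i j hij => (hS hij).2.2.1) hm hwt
  refine ⟨fun r i => if r ∈ T i then 1 else 0, ?_, fun i => ?_⟩
  · refine isCoveringArray_two_two_iff_colSupp.2 fun i j hij => ?_
    simp only [colSupp_ite]
    have hTij : (T i ∩ T j).Nonempty :=
      (hS hij).2.2.2.mono (inter_subset_inter (hST i).1 (hST j).1)
    exact ⟨union_ne_univ_of_inter_nonempty (hST i).2.le (hST j).2.le hm hTij,
      hT hij.symm, hT hij, hTij⟩
  · have hT_supp := colSupp_ite T i
    exact ⟨(congrArg card hT_supp).trans (hST i).2, hT_supp ▸ (hST i).1⟩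

/-- a binary 2-covering array whose columns all have weight at most `⌊m/2⌋`
can be turned into one all of whose columns have weight exactly `⌊m/2⌋`, enlarging supports. -/
theorem weight_saturation (m n : ℕ) (hm : 4 ≤ m) (C : Fin m → Fin n → Fin 2)
    (hC : IsCoveringArray m n 2 2 C)
    (hwt : ∀ i : Fin n, colWt C i ≤ m / 2) :
    ∃ C' : Fin m → Fin n → Fin 2, IsCoveringArray m n 2 2 C' ∧
      ∀ i : Fin n, colWt C' i = m / 2 ∧ colSupp C i ⊆ colSupp C' i :=
  weight_saturation_general m n C hC hwt
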